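/- For all cache algorithms P and Q and all lengths l: r_{P,Q}(l) ≤ 2·r_{Q,P}(l) − 1. Consequently r_{P,Q} and r_{Q,P} have the same asymptotic order: O(r_{P,Q}(l)) = O(r_{Q,P}(l)). -/

import Mathlib

structure CacheAlg (B : Type) where
  S : Type
  init : S
  n : ℕ
  tr : S → Fin n → S
  evict : S → B → S × Fin n

variable {B : Type} [DecidableEq B]

abbrev CacheAlg.Config (P : CacheAlg B) := P.S × (Fin P.n → Option B)

noncomputable def CacheAlg.upd (P : CacheAlg B) (g : P.Config) (b : B) : P.Config :=
  if h : ∃ j, g.2 j = some b then (P.tr g.1 h.choose, g.2)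
  else ((P.evict g.1 b).1, Function.update g.2 (P.evict g.1 b).2 (some b))

noncomputable def CacheAlg.updTrace (P : CacheAlg B) (g : P.Config) : List B → P.Config
  | [] => g
  | b :: t => P.updTrace (P.upd g b) t

noncomputable def CacheAlg.missesFrom (P : CacheAlg B) (g : P.Config) : List B → ℕ
  | [] => 0
  | b :: t => (if ∃ j, g.2 j = some b then 0 else 1) + P.missesFrom (P.upd g b) t

def CacheAlg.initConfig (P : CacheAlg B) : P.Config := (P.init, fun _ => none)

/-- Number of misses of `P` on trace `t` from the empty initial configuration. -/
noncomputable def CacheAlg.misses (P : CacheAlg B) (t : List B) : ℕ := P.missesFrom P.initConfig t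

/-- The leak ratio `r_{P,Q}(l)`: supremum over sets `T` of traces of length `l`
of `|P(T)| / |Q(T)|`. -/
noncomputable def leakRatio (P Q : CacheAlg B) (l : ℕ) : ℝ :=
  sSup {r : ℝ | ∃ T : Finset (List B), T.Nonempty ∧ (∀ t ∈ T, t.length = l) ∧
    r = ((T.image P.misses).card : ℝ) / ((T.image Q.misses).card : ℝ)}

/-- Lifting of a bijection on blocks to cache contents, mapping `⊥` to `⊥`. -/
def renameContent (π : B ≃ B) {n : ℕ} (c : Fin n → Option B) : Fin n → Option B :=
  fun j => (c j).map π

/-- Lifting of a bijection on blocks to cache configurations. -/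
def CacheAlg.renameConfig (P : CacheAlg B) (π : B ≃ B) (g : P.Config) : P.Config :=
  (g.1, renameContent π g.2)

/-- The eviction function is independent of the accessed block. -/
def CacheAlg.EvictBlockIndep (P : CacheAlg B) : Prop :=
  ∀ (s : P.S) (b b' : B), P.evict s b = P.evict s b'

/-- Congruence of pairs of cache configurations via a simultaneous renaming. -/
def CacheCongruent (P Q : CacheAlg B) (x y : P.Config × Q.Config) : Prop :=
  ∃ π : B ≃ B, P.renameConfig π x.1 = y.1 ∧ Q.renameConfig π x.2 = y.2


/-! Since there are more blocks than cache lines in `P` and `Q` together, every prefix of a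
trace `t` can be padded, with fresh blocks (a miss in both caches) and with a block cached in
both (a hit in both), so that `P` misses exactly as often as on `t`. Along the prefixes the
`Q`-miss counts of these padded traces sweep out every value between `P.misses t` and
`Q.misses t`, which gives `|P.misses t - Q.misses t| + 1 ≤ r_{Q,P}(l)`. Hence on any set `T` of
traces of length `l` each `P`-count lies within `r_{Q,P}(l) - 1` of a `Q`-count, and
`|P(T)| ≤ (2 r_{Q,P}(l) - 1) |Q(T)|`. -/

open Cardinal Finset

theorem exists_eq_of_dist_succ_le_one {v : ℕ → ℕ} {a b : ℕ} (hab : a ≤ b)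
    (hv : ∀ i, a ≤ i → i < b → Nat.dist (v i) (v (i + 1)) ≤ 1) {c : ℕ}
    (hc : min (v a) (v b) ≤ c ∧ c ≤ max (v a) (v b)) : ∃ i, a ≤ i ∧ i ≤ b ∧ v i = c := by
  induction b, hab using Nat.le_induction with
  | base => exact ⟨a, le_rfl, le_rfl, by omega⟩
  | succ b hab ih =>
    have hstep := hv b hab (Nat.lt_succ_self b)
    unfold Nat.dist at hstep
    by_cases hcb : min (v a) (v b) ≤ c ∧ c ≤ max (v a) (v b)
    · obtain ⟨i, hai, hib, hvi⟩ := ih (fun i hai hib => hv i hai (by omega)) hcb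
      exact ⟨i, hai, by omega, hvi⟩
    · exact ⟨b + 1, by omega, le_rfl, by omega⟩

theorem card_image_le_card_image_mul {α : Type*} (T : Finset α) (f g : α → ℕ) (K : ℕ)
    (h : ∀ x ∈ T, Nat.dist (f x) (g x) ≤ K) :
    (T.image f).card ≤ (T.image g).card * (2 * K + 1) := by
  have hcover : T.image f ⊆ (T.image g).biUnion fun q => Icc (q - K) (q + K) := by
    simp only [subset_iff, mem_image, mem_biUnion, mem_Icc]
    rintro _ ⟨x, hx, rfl⟩
    have := h x hx
    unfold Nat.dist at this
    exact ⟨g x, ⟨x, hx, rfl⟩, by omega, by omega⟩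
  refine (card_le_card hcover).trans (card_biUnion_le_card_mul _ _ _ fun q _ => ?_)
  rw [Nat.card_Icc]
  omega

theorem exists_not_cached_of_card_lt {β : Type} {n m : ℕ} (c₁ : Fin n → Option β)
    (c₂ : Fin m → Option β) (h : (n + m : Cardinal) < #β) :
    ∃ b : β, (¬∃ j, c₁ j = some b) ∧ ¬∃ j, c₂ j = some b := by
  by_contra hall
  have hcover : (Set.univ : Set β) ⊆ some ⁻¹' Set.range c₁ ∪ some ⁻¹' Set.range c₂ :=
    fun b _ => by_contra fun hb => hall ⟨b, fun h => hb (.inl h), fun h => hb (.inr h)⟩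
  have hle : #β ≤ n + m :=
    calc #β = #(Set.univ : Set β) := mk_univ.symm
      _ ≤ #(some ⁻¹' Set.range c₁ ∪ some ⁻¹' Set.range c₂ : Set β) := mk_le_mk_of_subset hcover
      _ ≤ #(some ⁻¹' Set.range c₁) + #(some ⁻¹' Set.range c₂) := mk_union_le _ _
      _ ≤ #(Set.range c₁) + #(Set.range c₂) := by
        gcongr <;> exact mk_preimage_of_injective _ _ (Option.some_injective β)
      _ ≤ n + m := by
        gcongr <;> exact mk_range_le.trans (mk_fin _).le
  exact hle.not_gt h

namespace CacheAlg

variable (P Q : CacheAlg B)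

theorem missesFrom_le_length (g : P.Config) (t : List B) : P.missesFrom g t ≤ t.length := by
  induction t generalizing g with
  | nil => simp [missesFrom]
  | cons b t ih =>
    have := ih (P.upd g b)
    rw [missesFrom]
    split <;> simp <;> omega

theorem missesFrom_append (g : P.Config) (s u : List B) :
    P.missesFrom g (s ++ u) = P.missesFrom g s + P.missesFrom (P.updTrace g s) u := by
  induction s generalizing g with
  | nil => simp [missesFrom, updTrace]
  | cons b s ih =>
    rw [List.cons_append, missesFrom, missesFrom, updTrace, ih]
    omega

theorem updTrace_append (g : P.Config) (s u : List B) :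
    P.updTrace g (s ++ u) = P.updTrace (P.updTrace g s) u := by
  induction s generalizing g with
  | nil => rfl
  | cons b s ih => exact ih _

theorem misses_append (s u : List B) :
    P.misses (s ++ u) = P.misses s + P.missesFrom (P.updTrace P.initConfig s) u :=
  P.missesFrom_append _ s u

theorem misses_le_misses_of_prefix {s t : List B} (h : s <+: t) : P.misses s ≤ P.misses t := by
  obtain ⟨u, rfl⟩ := h
  rw [misses_append]
  exact Nat.le_add_right _ _

theorem misses_append_le (s u : List B) : P.misses (s ++ u) ≤ P.misses s + u.length := by
  rw [misses_append]
  exact Nat.add_le_add_left (P.missesFrom_le_length _ u) _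

theorem misses_singleton (b : B) : P.misses [b] = 1 := by
  simp [misses, missesFrom, initConfig]

theorem cached_upd_self (g : P.Config) (b : B) : ∃ j, (P.upd g b).2 j = some b := by
  rw [upd]
  split
  · next h => exact h
  · exact ⟨(P.evict g.1 b).2, by simp⟩

theorem cached_updTrace_take_succ (t : List B) {i : ℕ} (hi : i < t.length) :
    ∃ j, (P.updTrace P.initConfig (t.take (i + 1))).2 j = some t[i] := by
  rw [List.take_add_one, List.getElem?_eq_getElem hi, Option.toList_some, updTrace_append]
  exact P.cached_upd_self _ _

theorem missesFrom_replicate_of_cached (g : P.Config) {b : B} (hb : ∃ j, g.2 j = some b)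
    (k : ℕ) : P.missesFrom g (List.replicate k b) = 0 := by
  induction k generalizing g with
  | zero => rfl
  | succ k ih =>
    have hupd : (P.upd g b).2 = g.2 := by rw [upd, dif_pos hb]
    rw [List.replicate_succ, missesFrom, if_pos hb, ih _ (hupd ▸ hb)]

variable {P Q}

theorem exists_padding (hB : (P.n + Q.n : Cardinal) < #B) {m k : ℕ} (hmk : m ≤ k)
    {gP : P.Config} {gQ : Q.Config} {b : B} (hbP : ∃ j, gP.2 j = some b)
    (hbQ : ∃ j, gQ.2 j = some b) :
    ∃ s : List B, s.length = k ∧ P.missesFrom gP s = m ∧ Q.missesFrom gQ s = m := by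
  induction m generalizing k gP gQ b with
  | zero =>
    exact ⟨List.replicate k b, List.length_replicate,
      P.missesFrom_replicate_of_cached gP hbP k, Q.missesFrom_replicate_of_cached gQ hbQ k⟩
  | succ m ih =>
    obtain ⟨k, rfl⟩ : ∃ k', k = k' + 1 := ⟨k - 1, by omega⟩
    obtain ⟨c, hcP, hcQ⟩ := exists_not_cached_of_card_lt gP.2 gQ.2 hB
    obtain ⟨s, hs, hsP, hsQ⟩ :=
      ih (k := k) (by omega) (P.cached_upd_self gP c) (Q.cached_upd_self gQ c)
    refine ⟨c :: s, by simp [hs], ?_, ?_⟩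
    · rw [missesFrom, if_neg hcP, hsP, Nat.add_comm]
    · rw [missesFrom, if_neg hcQ, hsQ, Nat.add_comm]

theorem exists_trace_take_append (hB : (P.n + Q.n : Cardinal) < #B) (t : List B) {i : ℕ}
    (hi : i < t.length) :
    ∃ u : List B, u.length = t.length ∧ P.misses u = P.misses t ∧
      Q.misses u = Q.misses (t.take (i + 1)) + (P.misses t - P.misses (t.take (i + 1))) := by
  have hrest := P.misses_append_le (t.take (i + 1)) (t.drop (i + 1))
  rw [List.take_append_drop, List.length_drop] at hrest
  have hprefix := P.misses_le_misses_of_prefix (List.take_prefix (i + 1) t)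
  obtain ⟨s, hs, hsP, hsQ⟩ := exists_padding hB
    (m := P.misses t - P.misses (t.take (i + 1))) (k := t.length - (i + 1)) (by omega)
    (P.cached_updTrace_take_succ t hi) (Q.cached_updTrace_take_succ t hi)
  refine ⟨t.take (i + 1) ++ s, by simp only [List.length_append, List.length_take, hs]; omega,
    ?_, ?_⟩
  · rw [misses_append, hsP]
    omega
  · rw [misses_append, hsQ]

/-- The sweep runs over prefixes of length `i ≥ 1`, whose last block is cached in both caches;
as the first access misses in both, it starts at `P.misses t`. -/
theorem exists_trace_misses_eq (hB : (P.n + Q.n : Cardinal) < #B) (t : List B) {c : ℕ}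
    (hc : min (P.misses t) (Q.misses t) ≤ c ∧ c ≤ max (P.misses t) (Q.misses t)) :
    ∃ u : List B, u.length = t.length ∧ P.misses u = P.misses t ∧ Q.misses u = c := by
  obtain rfl | hne := eq_or_ne t []
  · exact ⟨[], rfl, rfl, by simp only [misses, missesFrom] at hc ⊢; omega⟩
  set v : ℕ → ℕ := fun i => Q.misses (t.take i) + (P.misses t - P.misses (t.take i)) with hv
  have hv1 : v 1 = P.misses t := by
    obtain ⟨b, t', rfl⟩ := List.exists_cons_of_ne_nil hne
    have hb : [b] <+: b :: t' := List.prefix_append [b] t'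
    have := P.misses_le_misses_of_prefix hb
    simp only [hv, List.take_one, List.head?_cons, Option.toList_some, misses_singleton] at this ⊢
    omega
  have hvl : v t.length = Q.misses t := by simp [hv]
  have hstep : ∀ i, 1 ≤ i → i < t.length → Nat.dist (v i) (v (i + 1)) ≤ 1 := by
    intro i _ hi
    have htake : t.take (i + 1) = t.take i ++ [t[i]] := by
      rw [List.take_add_one, List.getElem?_eq_getElem hi, Option.toList_some]
    have hP := P.misses_le_misses_of_prefix (List.take_prefix (i + 1) t)
    have hP₁ := P.misses_le_misses_of_prefix (List.prefix_append (t.take i) [t[i]])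
    have hP₂ := P.misses_append_le (t.take i) [t[i]]
    have hQ₁ := Q.misses_le_misses_of_prefix (List.prefix_append (t.take i) [t[i]])
    have hQ₂ := Q.misses_append_le (t.take i) [t[i]]
    simp only [← htake, List.length_singleton] at hP₁ hP₂ hQ₁ hQ₂
    simp only [hv, Nat.dist]
    omega
  have hlen : 1 ≤ t.length := List.length_pos_iff.mpr hne
  obtain ⟨i, hi₁, hil, hvi⟩ :=
    exists_eq_of_dist_succ_le_one hlen hstep (by rw [hv1, hvl]; exact hc)
  obtain ⟨i, rfl⟩ : ∃ i', i = i' + 1 := ⟨i - 1, by omega⟩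
  obtain ⟨u, hulen, huP, huQ⟩ := exists_trace_take_append hB t (Nat.lt_of_succ_le hil)
  exact ⟨u, hulen, huP, huQ.trans hvi⟩

end CacheAlg

open CacheAlg

section LeakRatio

variable (P Q : CacheAlg B)

theorem leakRatio_nonneg (l : ℕ) : 0 ≤ leakRatio P Q l :=
  Real.sSup_nonneg (by rintro _ ⟨T, -, -, rfl⟩; positivity)

theorem div_le_leakRatio {l : ℕ} {T : Finset (List B)} (hT : T.Nonempty)
    (hlen : ∀ t ∈ T, t.length = l) :
    ((T.image P.misses).card : ℝ) / (T.image Q.misses).card ≤ leakRatio P Q l := by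
  refine le_csSup ⟨l + 1, ?_⟩ ⟨T, hT, hlen, rfl⟩
  rintro _ ⟨T', hT', hlen', rfl⟩
  have hrange : T'.image P.misses ⊆ range (l + 1) := by
    simp only [subset_iff, mem_image, mem_range]
    rintro _ ⟨t, ht, rfl⟩
    exact Nat.lt_succ_of_le (hlen' t ht ▸ P.missesFrom_le_length _ t)
  have hnum : ((T'.image P.misses).card : ℝ) ≤ l + 1 := by
    exact_mod_cast (card_le_card hrange).trans (card_range _).le
  have hden : (1 : ℝ) ≤ (T'.image Q.misses).card := by
    exact_mod_cast card_pos.mpr (hT'.image _)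
  exact (div_le_self (by positivity) hden).trans hnum

theorem one_le_leakRatio [Nonempty B] (l : ℕ) : 1 ≤ leakRatio P Q l := by
  inhabit B
  simpa using div_le_leakRatio P Q (singleton_nonempty (List.replicate l default))
    (by simp)

variable {P Q}

theorem dist_misses_add_one_le_leakRatio (hB : (P.n + Q.n : Cardinal) < #B) (t : List B) :
    (Nat.dist (P.misses t) (Q.misses t) : ℝ) + 1 ≤ leakRatio Q P t.length := by
  set I := Icc (min (P.misses t) (Q.misses t)) (max (P.misses t) (Q.misses t))
  choose! u hulen huP huQ using fun c (hc : c ∈ I) => exists_trace_misses_eq hB t (mem_Icc.mp hc)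
  have hI : I.Nonempty := nonempty_Icc.mpr min_le_max
  have hQ : (I.image u).image Q.misses = I := by
    rw [image_image]
    exact (image_congr huQ).trans image_id'
  have hP : (I.image u).image P.misses = {P.misses t} := by
    rw [image_image]
    exact (image_congr huP).trans (image_const hI _)
  have hcard : I.card = Nat.dist (P.misses t) (Q.misses t) + 1 := by
    rw [Nat.card_Icc, Nat.dist_eq_max_sub_min]
    omega
  have hratio := div_le_leakRatio Q P (hI.image u) (by simpa using hulen)
  rw [hQ, hP, hcard, card_singleton] at hratio
  simpa using hratio

theorem leakRatio_le_two_mul_leakRatio_sub_one (hB : (P.n + Q.n : Cardinal) < #B) (l : ℕ) :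
    leakRatio P Q l ≤ 2 * leakRatio Q P l - 1 := by
  have : Nonempty B := mk_ne_zero_iff.mp (pos_of_gt hB).ne'
  have hR := one_le_leakRatio Q P l
  refine Real.sSup_le ?_ (by linarith)
  rintro _ ⟨T, hT, hlen, rfl⟩
  obtain ⟨w, hw, hmax⟩ := T.exists_max_image (fun x => Nat.dist (P.misses x) (Q.misses x)) hT
  have hK := dist_misses_add_one_le_leakRatio hB w
  rw [hlen w hw] at hK
  have hcard : ((T.image P.misses).card : ℝ) ≤
      (T.image Q.misses).card * (2 * Nat.dist (P.misses w) (Q.misses w) + 1) := by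
    exact_mod_cast card_image_le_card_image_mul T _ _ _ hmax
  have hden : (0 : ℝ) < (T.image Q.misses).card := by
    exact_mod_cast card_pos.mpr (hT.image _)
  rw [div_le_iff₀ hden]
  nlinarith

theorem leakRatio_isBigO (hB : (P.n + Q.n : Cardinal) < #B) :
    leakRatio P Q =O[Filter.atTop] leakRatio Q P :=
  Asymptotics.isBigO_of_le' (c := 2) _ fun l => by
    have := leakRatio_le_two_mul_leakRatio_sub_one hB l
    rw [Real.norm_of_nonneg (leakRatio_nonneg P Q l),
      Real.norm_of_nonneg (by linarith [leakRatio_nonneg P Q l])]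
    linarith

end LeakRatio

theorem leakRatio_symmetric (P Q : CacheAlg B)
    (hB : (P.n + Q.n : Cardinal) < Cardinal.mk B) :
    (∀ l : ℕ, leakRatio P Q l ≤ 2 * leakRatio Q P l - 1) ∧
    (leakRatio P Q =O[Filter.atTop] leakRatio Q P ∧
     leakRatio Q P =O[Filter.atTop] leakRatio P Q) := by
  have hB' : (Q.n + P.n : Cardinal) < Cardinal.mk B := by rwa [add_comm]
  exact ⟨leakRatio_le_two_mul_leakRatio_sub_one hB, leakRatio_isBigO hB, leakRatio_isBigO hB'⟩
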